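/- If an isotropic function σ̂: PSym(3) → Sym(3) satisfies the strict Baker–Ericksen inequalities (for each B with eigenvalues λᵢ² and corresponding eigenvalues σᵢ of σ̂(B): λᵢ > λⱼ ⟹ σᵢ > σⱼ), then σ̂ is bi-coaxial, and hence semi-invertible. -/

import Mathlib

open Matrix

def IsEigenvector {n : ℕ} (A : Matrix (Fin n) (Fin n) ℝ) (v : Fin n → ℝ) : Prop :=
  v ≠ 0 ∧ ∃ μ : ℝ, A.mulVec v = μ • v

/-- `A` is coaxial to `B`: every eigenvector of `A` is an eigenvector of `B`. -/
def Coaxial {n : ℕ} (A B : Matrix (Fin n) (Fin n) ℝ) : Prop :=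
  ∀ v : Fin n → ℝ, IsEigenvector A v → IsEigenvector B v

/-- A matrix is orthogonal. -/
def IsOrthogonal {n : ℕ} (Q : Matrix (Fin n) (Fin n) ℝ) : Prop :=
  Q * Qᵀ = 1 ∧ Qᵀ * Q = 1

/-- PSym(3): positive-definite symmetric real 3×3 matrices. -/
def PSym3 : Set (Matrix (Fin 3) (Fin 3) ℝ) := {B | B.IsSymm ∧ B.PosDef}

/-- σ̂ is semi-invertible: B = ψ₀ I + ψ₁ σ̂(B) + ψ₂ σ̂(B)² with coefficients ψᵢ
depending only on the matrix invariants of B. -/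
def SemiInvertible (σ : Matrix (Fin 3) (Fin 3) ℝ → Matrix (Fin 3) (Fin 3) ℝ) : Prop :=
  ∃ ψ : Fin 3 → (Matrix (Fin 3) (Fin 3) ℝ → ℝ),
    (∀ k : Fin 3, ∀ B ∈ PSym3, ∀ Q : Matrix (Fin 3) (Fin 3) ℝ, IsOrthogonal Q →
      ψ k (Qᵀ * B * Q) = ψ k B) ∧
    ∀ B ∈ PSym3, B = ψ 0 B • 1 + ψ 1 B • σ B + ψ 2 B • (σ B) ^ 2

/-- The strict Baker–Ericksen inequalities: if v, w are common eigenvectors of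
B and σ̂(B), with eigenvalues λᵢ², λⱼ² of B and corresponding eigenvalues
σᵢ, σⱼ of σ̂(B), then λᵢ > λⱼ implies σᵢ > σⱼ. -/
def StrictBakerEricksen
    (σ : Matrix (Fin 3) (Fin 3) ℝ → Matrix (Fin 3) (Fin 3) ℝ) : Prop :=
  ∀ B ∈ PSym3, ∀ v w : Fin 3 → ℝ, v ≠ 0 → w ≠ 0 →
    ∀ lami lamj si sj : ℝ, 0 < lami → 0 < lamj →
      B.mulVec v = (lami ^ 2) • v → (σ B).mulVec v = si • v →
      B.mulVec w = (lamj ^ 2) • w → (σ B).mulVec w = sj • w →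
      lami > lamj → si > sj

/-!
If `B v = μ v`, the reflection in `v⊥` is orthogonal and fixes `B`, so by isotropy it commutes
with `σ̂(B)`; hence `σ̂(B) v` lies in the `-1`-eigenspace of the reflection, which is `ℝ v`.
Thus `σ̂(B)` is diagonal, with eigenvalues `sᵢ`, in an orthonormal eigenbasis of `B`. The strict
Baker–Ericksen inequalities make `λᵢ²` a function of `sᵢ`, so Lagrange interpolation gives a
polynomial `p` of degree `≤ 2` with `B = p(σ̂(B))`, which yields the reverse coaxiality.
Choosing `p` on a fixed representative of each orbit of orthogonal conjugation makes its
coefficients invariant.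
-/

open Polynomial

section Householder

variable {n : ℕ}

noncomputable def householder (v : Fin n → ℝ) : Matrix (Fin n) (Fin n) ℝ :=
  1 - (2 / (v ⬝ᵥ v)) • vecMulVec v v

lemma householder_mulVec (v w : Fin n → ℝ) :
    householder v *ᵥ w = w - (2 * (v ⬝ᵥ w) / (v ⬝ᵥ v)) • v := by
  rw [householder, sub_mulVec, one_mulVec, smul_mulVec, vecMulVec_mulVec, op_smul_eq_smul,
    smul_smul]
  ring_nf

lemma householder_transpose (v : Fin n → ℝ) : (householder v)ᵀ = householder v := by
  rw [householder, transpose_sub, transpose_one, transpose_smul, transpose_vecMulVec]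

lemma householder_mulVec_self {v : Fin n → ℝ} (hv : v ≠ 0) : householder v *ᵥ v = -v := by
  rw [householder_mulVec, mul_div_assoc, div_self (dotProduct_self_eq_zero.not.2 hv)]
  module

lemma householder_mul_self {v : Fin n → ℝ} (hv : v ≠ 0) :
    householder v * householder v = 1 := by
  refine toLin'.injective (LinearMap.ext fun w => ?_)
  have hvv : v ⬝ᵥ v ≠ 0 := dotProduct_self_eq_zero.not.2 hv
  simp only [toLin'_apply, ← mulVec_mulVec, one_mulVec, householder_mulVec, dotProduct_sub,
    dotProduct_smul, smul_eq_mul]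
  match_scalars <;> field_simp
  ring

lemma isOrthogonal_householder {v : Fin n → ℝ} (hv : v ≠ 0) :
    IsOrthogonal (householder v) := by
  rw [IsOrthogonal, householder_transpose, and_self]
  exact householder_mul_self hv

lemma commute_householder {B : Matrix (Fin n) (Fin n) ℝ} (hB : B.IsSymm) {v : Fin n → ℝ}
    {μ : ℝ} (hv : B *ᵥ v = μ • v) : Commute B (householder v) := by
  refine toLin'.injective (LinearMap.ext fun w => ?_)
  have hvB : v ᵥ* B = μ • v := by rw [← mulVec_transpose, hB.eq, hv]
  simp only [toLin'_apply, ← mulVec_mulVec, householder_mulVec, mulVec_sub, mulVec_smul, hv,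
    dotProduct_mulVec, hvB, smul_eq_mul, smul_dotProduct]
  module

lemma eq_smul_of_householder_mulVec_eq_neg {v u : Fin n → ℝ}
    (hu : householder v *ᵥ u = -u) : u = ((v ⬝ᵥ u) / (v ⬝ᵥ v)) • v := by
  rw [householder_mulVec] at hu
  linear_combination (norm := module) (1 / 2 : ℝ) • hu

lemma mulVec_eq_smul_of_commute_householder {A : Matrix (Fin n) (Fin n) ℝ} {v : Fin n → ℝ}
    (hv : v ≠ 0) (hA : Commute A (householder v)) :
    A *ᵥ v = ((v ⬝ᵥ A *ᵥ v) / (v ⬝ᵥ v)) • v := by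
  refine eq_smul_of_householder_mulVec_eq_neg ?_
  rw [mulVec_mulVec, ← hA.eq, ← mulVec_mulVec, householder_mulVec_self hv, mulVec_neg]

theorem coaxial_of_forall_isOrthogonal {A B : Matrix (Fin n) (Fin n) ℝ} (hB : B.IsSymm)
    (h : ∀ Q, IsOrthogonal Q → Qᵀ * B * Q = B → Qᵀ * A * Q = A) : Coaxial B A := by
  rintro v ⟨hv, μ, hμ⟩
  refine ⟨hv, _, mulVec_eq_smul_of_commute_householder hv ?_⟩
  have hQQ := householder_mul_self hv
  have hBQ : householder v * B * householder v = B := by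
    rw [← (commute_householder hB hμ).eq, mul_assoc, hQQ, mul_one]
  have hAQ := h _ (isOrthogonal_householder hv) (by rwa [householder_transpose])
  rw [householder_transpose] at hAQ
  calc A * householder v = householder v * A * householder v * householder v := by rw [hAQ]
    _ = householder v * A := by rw [mul_assoc, hQQ, mul_one]

end Householder

section OrthogonalConj

variable {n : ℕ}

lemma isOrthogonal_one : IsOrthogonal (1 : Matrix (Fin n) (Fin n) ℝ) := by
  simp [IsOrthogonal]

lemma IsOrthogonal.transpose {Q : Matrix (Fin n) (Fin n) ℝ} (hQ : IsOrthogonal Q) :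
    IsOrthogonal Qᵀ := by
  rw [IsOrthogonal, transpose_transpose]
  exact hQ.symm

lemma IsOrthogonal.mul {Q R : Matrix (Fin n) (Fin n) ℝ} (hQ : IsOrthogonal Q)
    (hR : IsOrthogonal R) : IsOrthogonal (Q * R) := by
  refine ⟨?_, ?_⟩ <;> rw [transpose_mul]
  · rw [mul_assoc, ← mul_assoc R, hR.1, one_mul, hQ.1]
  · rw [mul_assoc, ← mul_assoc Qᵀ, hQ.2, one_mul, hR.2]

lemma IsOrthogonal.mul_transpose_mul_mul_mul_transpose {Q : Matrix (Fin n) (Fin n) ℝ}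
    (hQ : IsOrthogonal Q) (A : Matrix (Fin n) (Fin n) ℝ) : Q * (Qᵀ * A * Q) * Qᵀ = A := by
  rw [← mul_assoc, ← mul_assoc, hQ.1, one_mul, mul_assoc, hQ.1, mul_one]

lemma IsOrthogonal.transpose_mem_unitary {Q : Matrix (Fin n) (Fin n) ℝ} (hQ : IsOrthogonal Q) :
    Qᵀ ∈ unitary (Matrix (Fin n) (Fin n) ℝ) := by
  rw [Unitary.mem_iff, star_eq_conjTranspose, conjTranspose_eq_transpose_of_trivial,
    transpose_transpose]
  exact hQ

lemma IsOrthogonal.aeval_conj {Q : Matrix (Fin n) (Fin n) ℝ} (hQ : IsOrthogonal Q)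
    (A : Matrix (Fin n) (Fin n) ℝ) (p : ℝ[X]) :
    aeval (Qᵀ * A * Q) p = Qᵀ * aeval A p * Q := by
  simpa [star_eq_conjTranspose] using
    aeval_algHom_apply (Unitary.conjStarAlgAut ℝ _ ⟨Qᵀ, hQ.transpose_mem_unitary⟩) A p

lemma IsOrthogonal.transpose_mul_mul_mem_PSym3 {Q B : Matrix (Fin 3) (Fin 3) ℝ}
    (hQ : IsOrthogonal Q) (hB : B ∈ PSym3) : Qᵀ * B * Q ∈ PSym3 := by
  have hQinj : Function.Injective Q.mulVec :=
    Function.LeftInverse.injective (g := Qᵀ.mulVec) fun x => by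
      rw [mulVec_mulVec, hQ.2, one_mulVec]
  have hpd : (Qᵀ * B * Q).PosDef := by
    simpa [conjTranspose_eq_transpose_of_trivial] using hB.2.conjTranspose_mul_mul_same hQinj
  refine ⟨?_, hpd⟩
  simpa [IsSymm, conjTranspose_eq_transpose_of_trivial] using hpd.isHermitian.eq

lemma IsOrthogonal.transpose_mul_mul_mem_PSym3_iff {Q B : Matrix (Fin 3) (Fin 3) ℝ}
    (hQ : IsOrthogonal Q) : Qᵀ * B * Q ∈ PSym3 ↔ B ∈ PSym3 := by
  refine ⟨fun h => ?_, hQ.transpose_mul_mul_mem_PSym3⟩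
  simpa [hQ.mul_transpose_mul_mul_mul_transpose] using hQ.transpose.transpose_mul_mul_mem_PSym3 h

def orthogonalConj (n : ℕ) : Setoid (Matrix (Fin n) (Fin n) ℝ) where
  r A B := ∃ Q, IsOrthogonal Q ∧ B = Qᵀ * A * Q
  iseqv.refl A := ⟨1, isOrthogonal_one, by simp⟩
  iseqv.symm := by
    rintro A _ ⟨Q, hQ, rfl⟩
    refine ⟨Qᵀ, hQ.transpose, ?_⟩
    rw [transpose_transpose, hQ.mul_transpose_mul_mul_mul_transpose]
  iseqv.trans := by
    rintro A _ _ ⟨Q, hQ, rfl⟩ ⟨R, hR, rfl⟩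
    exact ⟨Q * R, hQ.mul hR, by simp only [transpose_mul, mul_assoc]⟩

end OrthogonalConj

section Interpolation

theorem aeval_mulVec_of_mulVec_eq_smul {R m : Type*} [CommRing R] [Fintype m] [DecidableEq m]
    {A : Matrix m m R} {v : m → R} {μ : R}
    (h : A *ᵥ v = μ • v) (p : R[X]) : aeval A p *ᵥ v = p.eval μ • v := by
  induction p using Polynomial.induction_on with
  | C a => rw [aeval_C, Algebra.algebraMap_eq_smul_one, smul_mulVec, one_mulVec, eval_C]
  | add p q hp hq => rw [map_add, add_mulVec, hp, hq, eval_add, add_smul]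
  | monomial k a ih =>
    rw [pow_succ, ← mul_assoc, map_mul, aeval_X, ← mulVec_mulVec, h, mulVec_smul, ih, smul_smul]
    simp only [eval_mul, eval_pow, eval_X, eval_C]
    congr 1
    ring

theorem exists_degree_lt_eval_eq {K ι : Type*} [Field K] [Fintype ι] {s d : ι → K}
    (h : Function.FactorsThrough d s) :
    ∃ p : K[X], p.degree < Fintype.card ι ∧ ∀ i, p.eval (s i) = d i := by
  classical
  refine ⟨Lagrange.interpolate (Finset.univ.image s) id (Function.extend s d 0), ?_,
    fun i => ?_⟩
  · refine (Lagrange.degree_interpolate_lt (r := Function.extend s d 0)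
      (Set.injOn_id _)).trans_le ?_
    exact_mod_cast Finset.card_image_le.trans Finset.card_univ.le
  · rw [← id_eq (s i), Lagrange.eval_interpolate_at_node _ (Set.injOn_id _)
      (Finset.mem_image_of_mem s (Finset.mem_univ i)), h.extend_apply]

theorem exists_eq_aeval_of_eigenbasis {K m ι : Type*} [Field K] [Fintype m] [DecidableEq m]
    [Fintype ι] (b : Module.Basis ι K (m → K)) {A B : Matrix m m K} {s d : ι → K}
    (hA : ∀ i, A *ᵥ b i = s i • b i) (hB : ∀ i, B *ᵥ b i = d i • b i)
    (hsd : Function.FactorsThrough d s) :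
    ∃ p : K[X], p.degree < Fintype.card ι ∧ B = aeval A p := by
  obtain ⟨p, hdeg, hp⟩ := exists_degree_lt_eval_eq hsd
  refine ⟨p, hdeg, toLin'.injective (b.ext fun i => ?_)⟩
  rw [toLin'_apply, toLin'_apply, hB, aeval_mulVec_of_mulVec_eq_smul (hA i), hp]

theorem coaxial_aeval {n : ℕ} (A : Matrix (Fin n) (Fin n) ℝ) (p : ℝ[X]) :
    Coaxial A (aeval A p) :=
  fun _ ⟨hv, _, hμ⟩ => ⟨hv, _, aeval_mulVec_of_mulVec_eq_smul hμ p⟩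

end Interpolation

theorem Setoid.exists_invariant_choice {α β : Type*} (r : Setoid α) {P : α → β → Prop}
    (hP : ∀ a b, r a b → ∀ x, P a x → P b x) (h : ∀ a, ∃ x, P a x) :
    ∃ f : α → β, (∀ a b, r a b → f a = f b) ∧ ∀ a, P a (f a) :=
  ⟨fun a => (h (Quotient.mk r a).out).choose,
    fun _ _ hab => by simp only [Quotient.sound hab],
    fun a => hP _ _ (Quotient.mk_out a) _ (h _).choose_spec⟩

section BakerEricksen

def IsIsotropic (σ : Matrix (Fin 3) (Fin 3) ℝ → Matrix (Fin 3) (Fin 3) ℝ) : Prop :=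
  ∀ B ∈ PSym3, ∀ Q : Matrix (Fin 3) (Fin 3) ℝ, IsOrthogonal Q →
    σ (Qᵀ * B * Q) = Qᵀ * σ B * Q

variable {σ : Matrix (Fin 3) (Fin 3) ℝ → Matrix (Fin 3) (Fin 3) ℝ}

lemma StrictBakerEricksen.lt_of_eigenvalue_lt (hBE : StrictBakerEricksen σ) {B : Matrix (Fin 3) (Fin 3) ℝ}
    (hB : B ∈ PSym3) {v w : Fin 3 → ℝ} (hv : v ≠ 0) (hw : w ≠ 0) {d d' s s' : ℝ}
    (hBv : B *ᵥ v = d • v) (hσv : σ B *ᵥ v = s • v) (hBw : B *ᵥ w = d' • w)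
    (hσw : σ B *ᵥ w = s' • w) (hd' : 0 < d') (hdd : d' < d) : s' < s := by
  have hd : 0 < d := hd'.trans hdd
  refine hBE B hB v w hv hw √d √d' s s' (Real.sqrt_pos.2 hd) (Real.sqrt_pos.2 hd') ?_ hσv ?_
    hσw (Real.sqrt_lt_sqrt hd'.le hdd)
  · rwa [Real.sq_sqrt hd.le]
  · rwa [Real.sq_sqrt hd'.le]

theorem coaxial_of_isIsotropic (hσiso : IsIsotropic σ) {B : Matrix (Fin 3) (Fin 3) ℝ}
    (hB : B ∈ PSym3) : Coaxial B (σ B) :=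
  coaxial_of_forall_isOrthogonal hB.1 fun Q hQ hQB => by rw [← hσiso B hB Q hQ, hQB]

theorem exists_eq_aeval_of_strictBakerEricksen (hσiso : IsIsotropic σ)
    (hBE : StrictBakerEricksen σ) {B : Matrix (Fin 3) (Fin 3) ℝ} (hB : B ∈ PSym3) :
    ∃ p : ℝ[X], p.natDegree < 3 ∧ B = aeval (σ B) p := by
  have hH := hB.2.isHermitian
  let b := hH.eigenvectorBasis.toBasis.map (WithLp.linearEquiv 2 ℝ (Fin 3 → ℝ))
  have hBb : ∀ i, B *ᵥ b i = hH.eigenvalues i • b i := by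
    simpa [b] using hH.mulVec_eigenvectorBasis
  choose s hs using fun i => (coaxial_of_isIsotropic hσiso hB (b i) ⟨b.ne_zero i, _, hBb i⟩).2
  have hlt : ∀ i j, hH.eigenvalues j < hH.eigenvalues i → s j < s i := fun i j =>
    hBE.lt_of_eigenvalue_lt hB (b.ne_zero i) (b.ne_zero j) (hBb i) (hs i) (hBb j) (hs j)
      (hB.2.eigenvalues_pos j)
  have hsd : Function.FactorsThrough hH.eigenvalues s := by
    intro i j hij
    rcases lt_trichotomy (hH.eigenvalues i) (hH.eigenvalues j) with h | h | h
    · exact absurd hij (hlt j i h).ne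
    · exact h
    · exact absurd hij (hlt i j h).ne'
  obtain ⟨p, hdeg, hp⟩ := exists_eq_aeval_of_eigenbasis b hs hBb hsd
  refine ⟨p, ?_, hp⟩
  rcases eq_or_ne p 0 with rfl | hp0
  · simp
  · exact (natDegree_lt_iff_degree_lt hp0).2 hdeg

theorem semiInvertible_of_forall_eq_aeval (hσiso : IsIsotropic σ)
    (h : ∀ B ∈ PSym3, ∃ p : ℝ[X], p.natDegree < 3 ∧ B = aeval (σ B) p) :
    SemiInvertible σ := by
  have hconj : ∀ A C, orthogonalConj 3 A C → ∀ p : ℝ[X],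
      (A ∈ PSym3 → p.natDegree < 3 ∧ A = aeval (σ A) p) →
      (C ∈ PSym3 → p.natDegree < 3 ∧ C = aeval (σ C) p) := by
    rintro A _ ⟨Q, hQ, rfl⟩ p hA hQA
    have hA' : A ∈ PSym3 := hQ.transpose_mul_mul_mem_PSym3_iff.1 hQA
    obtain ⟨hdeg, hAp⟩ := hA hA'
    refine ⟨hdeg, ?_⟩
    rw [hσiso A hA' Q hQ, hQ.aeval_conj, ← hAp]
  have hex : ∀ B, ∃ p : ℝ[X], B ∈ PSym3 → p.natDegree < 3 ∧ B = aeval (σ B) p := by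
    intro B
    by_cases hB : B ∈ PSym3
    · obtain ⟨p, hp⟩ := h B hB
      exact ⟨p, fun _ => hp⟩
    · exact ⟨0, fun h => absurd h hB⟩
  obtain ⟨f, hf_inv, hf⟩ := Setoid.exists_invariant_choice (orthogonalConj 3) hconj hex
  refine ⟨fun k B => (f B).coeff k, fun k B _ Q hQ => by simp only [hf_inv B _ ⟨Q, hQ, rfl⟩],
    fun B hB => ?_⟩
  obtain ⟨hdeg, hBf⟩ := hf B hB
  conv_lhs => rw [hBf, aeval_eq_sum_range' hdeg]
  simp [Finset.sum_range_succ]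

end BakerEricksen

theorem strictBE_implies_bicoaxial_and_semiInvertible_general
    (σ : Matrix (Fin 3) (Fin 3) ℝ → Matrix (Fin 3) (Fin 3) ℝ)
    (hσiso : ∀ B ∈ PSym3, ∀ Q : Matrix (Fin 3) (Fin 3) ℝ, IsOrthogonal Q →
      σ (Qᵀ * B * Q) = Qᵀ * σ B * Q)
    (hBE : StrictBakerEricksen σ) :
    (∀ B ∈ PSym3, Coaxial B (σ B) ∧ Coaxial (σ B) B) ∧ SemiInvertible σ := by
  have hrep : ∀ B ∈ PSym3, ∃ p : ℝ[X], p.natDegree < 3 ∧ B = aeval (σ B) p :=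
    fun _ => exists_eq_aeval_of_strictBakerEricksen hσiso hBE
  refine ⟨fun B hB => ⟨coaxial_of_isIsotropic hσiso hB, ?_⟩,
    semiInvertible_of_forall_eq_aeval hσiso hrep⟩
  obtain ⟨p, -, hp⟩ := hrep B hB
  have h := coaxial_aeval (σ B) p
  rwa [← hp] at h

/-- An isotropic function satisfying the strict Baker–Ericksen
inequalities is bi-coaxial, and hence semi-invertible. -/
theorem strictBE_implies_bicoaxial_and_semiInvertible
    (σ : Matrix (Fin 3) (Fin 3) ℝ → Matrix (Fin 3) (Fin 3) ℝ)
    (hσsym : ∀ B ∈ PSym3, (σ B).IsSymm)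
    (hσiso : ∀ B ∈ PSym3, ∀ Q : Matrix (Fin 3) (Fin 3) ℝ, IsOrthogonal Q →
      σ (Qᵀ * B * Q) = Qᵀ * σ B * Q)
    (hBE : StrictBakerEricksen σ) :
    (∀ B ∈ PSym3, Coaxial B (σ B) ∧ Coaxial (σ B) B) ∧ SemiInvertible σ :=
  strictBE_implies_bicoaxial_and_semiInvertible_general σ hσiso hBE
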